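/- arXiv:1712.05450 — 4 statements merged into one kernel-verified Lean document; each statement's English description precedes it below -/
import Mathlib

section
/- If f is a second-order supermodular function, then for any fixed sets S and Z, the function R(A) = (f(S ∪ Z) − f(Z)) − (f(S ∪ Z ∪ A) − f(Z ∪ A)), defined on sets A disjoint from S ∪ Z, is submodular: for A ⊆ B (both disjoint from S ∪ Z) and e ∉ B ∪ S ∪ Z, R(A ∪ {e}) − R(A) ≥ R(B ∪ {e}) − R(B). -/
/-- If `f` is second-order supermodular, then for fixed `S, Z`, the
function `R(A) = (f(S∪Z) − f(Z)) − (f(S∪Z∪A) − f(Z∪A))` is submodular on sets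
disjoint from `S ∪ Z`. -/
theorem stmt1 {α : Type*} [DecidableEq α] (f : Finset α → ℝ)
    (hsos : ∀ (A B S : Finset α) (e : α), A ⊆ B → Disjoint S B →
      (f (A ∪ {e}) - f A) - (f (B ∪ {e}) - f B) ≥
      (f (A ∪ S ∪ {e}) - f (A ∪ S)) - (f (B ∪ S ∪ {e}) - f (B ∪ S)))
    (S Z : Finset α)
    (R : Finset α → ℝ)
    (hR : ∀ A : Finset α, R A = (f (S ∪ Z) - f Z) - (f (S ∪ Z ∪ A) - f (Z ∪ A)))
    (A B : Finset α) (e : α) (hAB : A ⊆ B)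
    (hA : Disjoint A (S ∪ Z)) (hB : Disjoint B (S ∪ Z))
    (he : e ∉ B ∪ S ∪ Z) :
    R (A ∪ {e}) - R A ≥ R (B ∪ {e}) - R B := by
  have hSB : Disjoint (S \ Z) (Z ∪ B) := by
    rw [Finset.disjoint_union_right]
    constructor
    · exact Finset.sdiff_disjoint
    · exact Finset.disjoint_of_subset_left
        (Finset.sdiff_subset.trans Finset.subset_union_left) hB.symm
  have hsub : Z ∪ A ⊆ Z ∪ B := Finset.union_subset_union_right hAB
  have key := hsos (Z ∪ A) (Z ∪ B) (S \ Z) e hsub hSB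
  have e1 : Z ∪ A ∪ (S \ Z) = S ∪ Z ∪ A := by
    ext x; simp only [Finset.mem_union, Finset.mem_sdiff]; tauto
  have e2 : Z ∪ B ∪ (S \ Z) = S ∪ Z ∪ B := by
    ext x; simp only [Finset.mem_union, Finset.mem_sdiff]; tauto
  have e3 : Z ∪ A ∪ (S \ Z) ∪ {e} = S ∪ Z ∪ (A ∪ {e}) := by
    ext x; simp only [Finset.mem_union, Finset.mem_sdiff]; tauto
  have e4 : Z ∪ B ∪ (S \ Z) ∪ {e} = S ∪ Z ∪ (B ∪ {e}) := by
    ext x; simp only [Finset.mem_union, Finset.mem_sdiff]; tauto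
  have e5 : Z ∪ A ∪ {e} = Z ∪ (A ∪ {e}) := by rw [Finset.union_assoc]
  have e6 : Z ∪ B ∪ {e} = Z ∪ (B ∪ {e}) := by rw [Finset.union_assoc]
  rw [e3, e4, e1, e2, e5, e6] at key
  rw [hR, hR, hR, hR]
  linarith
end

section
/- Every weighted coverage function is second-order supermodular. -/
lemma marg_eq {N U : Type*} [DecidableEq N] [DecidableEq U]
    (w : U → ℝ) (T : N → Finset U)
    (f : Finset N → ℝ) (hf : ∀ A : Finset N, f A = ∑ u ∈ A.biUnion T, w u)
    (X : Finset N) (e : N) :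
    f (X ∪ {e}) - f X = ∑ u ∈ T e \ X.biUnion T, w u := by
  have hcov : (X ∪ {e}).biUnion T = X.biUnion T ∪ (T e \ X.biUnion T) := by
    ext u
    simp only [Finset.mem_biUnion, Finset.mem_union, Finset.mem_sdiff,
      Finset.mem_singleton]
    constructor
    · rintro ⟨j, hj | rfl, hju⟩
      · exact Or.inl ⟨j, hj, hju⟩
      · by_cases h : ∃ i ∈ X, u ∈ T i
        · exact Or.inl h
        · exact Or.inr ⟨hju, by simpa using h⟩
    · rintro (⟨j, hj, hju⟩ | ⟨hte, _⟩)
      · exact ⟨j, Or.inl hj, hju⟩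
      · exact ⟨e, Or.inr rfl, hte⟩
  have hdisj : Disjoint (X.biUnion T) (T e \ X.biUnion T) :=
    Finset.disjoint_sdiff
  rw [hf, hf, hcov, Finset.sum_union hdisj]
  ring

/-- Every weighted coverage function is second-order supermodular. -/
theorem stmt3 {N U : Type*} [DecidableEq N] [DecidableEq U]
    (w : U → ℝ) (hw : ∀ u, 0 ≤ w u) (T : N → Finset U)
    (f : Finset N → ℝ) (hf : ∀ A : Finset N, f A = ∑ u ∈ A.biUnion T, w u)
    (A B S : Finset N) (e : N) (hAB : A ⊆ B) (hSB : Disjoint S B) :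
    (f (A ∪ {e}) - f A) - (f (A ∪ S ∪ {e}) - f (A ∪ S)) ≥
    (f (B ∪ {e}) - f B) - (f (B ∪ S ∪ {e}) - f (B ∪ S)) := by
  have key : ∀ X : Finset N,
      (f (X ∪ {e}) - f X) - (f (X ∪ S ∪ {e}) - f (X ∪ S)) =
      ∑ u ∈ (T e \ X.biUnion T) ∩ S.biUnion T, w u := by
    intro X
    rw [marg_eq w T f hf, marg_eq w T f hf]
    have hsub : T e \ (X ∪ S).biUnion T ⊆ T e \ X.biUnion T := by
      intro u hu
      simp only [Finset.mem_sdiff, Finset.mem_biUnion, Finset.mem_union,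
        not_exists, not_and] at hu ⊢
      exact ⟨hu.1, fun j hj => hu.2 j (Or.inl hj)⟩
    rw [← Finset.sum_sdiff hsub]
    have hset : (T e \ X.biUnion T) \ (T e \ (X ∪ S).biUnion T) =
        (T e \ X.biUnion T) ∩ S.biUnion T := by
      ext u
      simp only [Finset.mem_sdiff, Finset.mem_inter, Finset.mem_biUnion,
        Finset.mem_union, not_exists, not_and, not_forall, not_not]
      constructor
      · rintro ⟨⟨hte, hX⟩, h2⟩
        refine ⟨⟨hte, hX⟩, ?_⟩
        rcases h2 hte with ⟨j, hj, hju⟩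
        rcases hj with hj | hj
        · exact absurd hju (hX j hj)
        · exact ⟨j, hj, hju⟩
      · rintro ⟨⟨hte, hX⟩, j, hj, hju⟩
        exact ⟨⟨hte, hX⟩, fun _ => ⟨j, Or.inr hj, hju⟩⟩
    rw [hset]
    ring
  rw [key A, key B]
  apply Finset.sum_le_sum_of_subset_of_nonneg
  · intro u hu
    simp only [Finset.mem_inter, Finset.mem_sdiff, Finset.mem_biUnion,
      not_exists, not_and] at hu ⊢
    exact ⟨⟨hu.1.1, fun j hj => hu.1.2 j (hAB hj)⟩, hu.2⟩
  · intros; exact hw _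
end

section
/- If R is a nonnegative submodular function on a ground set T of size k with R(∅) = 0, and T' is a uniformly random subset of T of size k−1, then E[R(T')] ≥ ((k−1)/k) · R(T). -/
/-!
The `(k - 1)`-subsets of `T` are exactly the sets `T.erase a` with `a ∈ T`. Removing the points
of `T` one at a time, submodularity for `T \ S` and `T.erase a` gives
`R T + R (T \ insert a S) ≤ R (T \ S) + R (T.erase a)`, and these inequalities telescope to
`∑ a ∈ T, R (T.erase a) ≥ (k - 1) • R T + R ∅`.
-/

open Finset

namespace Finset

variable {α : Type*} [DecidableEq α]

theorem powersetCard_card_sub_one_eq_image_erase {s : Finset α} (hs : s.Nonempty) :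
    s.powersetCard (#s - 1) = s.image s.erase := by
  have hpos := hs.card_pos
  ext t
  simp only [mem_powersetCard, mem_image]
  constructor
  · rintro ⟨hts, hcard⟩
    obtain ⟨a, hat, rfl⟩ := exists_eq_insert_iff.mpr ⟨hts, by omega⟩
    exact ⟨a, mem_insert_self a t, erase_insert hat⟩
  · rintro ⟨a, ha, rfl⟩
    exact ⟨erase_subset a s, card_erase_of_mem ha⟩

theorem card_powersetCard_card_sub_one {s : Finset α} (hs : s.Nonempty) :
    #(s.powersetCard (#s - 1)) = #s := by
  rw [powersetCard_card_sub_one_eq_image_erase hs, card_image_of_injOn s.erase_injOn]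

theorem sum_powersetCard_card_sub_one {β : Type*} [AddCommMonoid β] {s : Finset α}
    (hs : s.Nonempty) (f : Finset α → β) :
    ∑ t ∈ s.powersetCard (#s - 1), f t = ∑ a ∈ s, f (s.erase a) := by
  rw [powersetCard_card_sub_one_eq_image_erase hs, sum_image s.erase_injOn]

end Finset

section Submodular

variable {α β : Type*} [DecidableEq α] [AddCommMonoid β] [PartialOrder β]
  [IsOrderedCancelAddMonoid β]

theorem card_nsmul_add_le_sum_erase_add {R : Finset α → β}
    (hsub : ∀ X Y : Finset α, R (X ∪ Y) + R (X ∩ Y) ≤ R X + R Y) {T S : Finset α}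
    (hST : S ⊆ T) : #S • R T + R (T \ S) ≤ ∑ a ∈ S, R (T.erase a) + R T := by
  induction S using Finset.induction with
  | empty => simp
  | @insert a S ha ih =>
    have ih := ih ((subset_insert a S).trans hST)
    have hunion : T \ S ∪ T.erase a = T := by grind
    have hinter : T \ S ∩ T.erase a = T \ insert a S := by grind
    have step := hsub (T \ S) (T.erase a)
    rw [hunion, hinter] at step
    rw [sum_insert ha, card_insert_of_notMem ha, succ_nsmul]
    refine le_of_add_le_add_right (a := R (T \ S)) ?_
    calc #S • R T + R T + R (T \ insert a S) + R (T \ S)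
        = (#S • R T + R (T \ S)) + (R T + R (T \ insert a S)) := by abel
      _ ≤ (∑ x ∈ S, R (T.erase x) + R T) + (R (T \ S) + R (T.erase a)) := add_le_add ih step
      _ = R (T.erase a) + ∑ x ∈ S, R (T.erase x) + R T + R (T \ S) := by abel

end Submodular

theorem stmt12_general {α : Type*} [DecidableEq α] (T : Finset α) (k : ℕ)
    (hk : T.card = k) (hkpos : 0 < k)
    (R : Finset α → ℝ)
    (h0 : R ∅ = 0)
    (hsub : ∀ X Y : Finset α, R (X ∪ Y) + R (X ∩ Y) ≤ R X + R Y) :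
    ((T.powersetCard (k - 1)).card : ℝ)⁻¹ * ∑ T' ∈ T.powersetCard (k - 1), R T'
      ≥ (((k : ℝ) - 1) / k) * R T := by
  subst hk
  have hT : T.Nonempty := card_pos.mp hkpos
  have key := card_nsmul_add_le_sum_erase_add hsub (subset_refl T)
  rw [Finset.sdiff_self, h0, add_zero, nsmul_eq_mul] at key
  rw [card_powersetCard_card_sub_one hT, sum_powersetCard_card_sub_one hT, ge_iff_le,
    div_mul_eq_mul_div, inv_mul_eq_div, div_le_div_iff_of_pos_right (by exact_mod_cast hkpos)]
  linarith

/-- For nonnegative submodular `R` with `R ∅ = 0` on a ground set `T`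
of size `k`, a uniformly random `(k−1)`-subset `T'` satisfies
`E[R(T')] ≥ ((k−1)/k)·R(T)`. -/
theorem stmt12 {α : Type*} [DecidableEq α] (T : Finset α) (k : ℕ)
    (hk : T.card = k) (hkpos : 0 < k)
    (R : Finset α → ℝ)
    (hnn : ∀ X : Finset α, 0 ≤ R X) (h0 : R ∅ = 0)
    (hsub : ∀ X Y : Finset α, R (X ∪ Y) + R (X ∩ Y) ≤ R X + R Y) :
    ((T.powersetCard (k - 1)).card : ℝ)⁻¹ * ∑ T' ∈ T.powersetCard (k - 1), R T'
      ≥ (((k : ℝ) - 1) / k) * R T :=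
  stmt12_general T k hk hkpos R h0 hsub
end

section
/- Let n be divisible by 4 and a*_i = (n−i)/((n−1)n) for 1 ≤ i ≤ 3n/4. Then 1/24 + Σ_{i=1}^{n/2} (1 + (i − n/4)/(6(n−i))) a*_i + Σ_{i=n/2+1}^{3n/4} (5/6 + (n/4)/(6(n−i))) a*_i = 1/24 + (89n²/32 − 15n/8)/(6(n−1)n), which is strictly greater than 1/24 + 89/192 for all n ≥ 2 with 4 | n. Hence the expression exceeds 0.5052. -/
/-!
For `i < n` each summand collapses to a linear function of `i` over the common denominator
`6 (n - 1) n`, namely `(23n/4 - 5i)` on the first range and `(21n/4 - 5i)` on the second, so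
both sums are Gauss sums. Clearing the positive denominator, the inequality becomes
`89 (n - 1) n < 89 n² - 60 n`.
-/

open Finset

lemma sum_Icc_add_one_sub_mul_natCast {K : Type*} [Field K] [CharZero K] (c b : K) {j k : ℕ}
    (hjk : j ≤ k) :
    ∑ i ∈ Icc (j + 1) k, (c - b * i) = (k - j) * c - b * (k * (k + 1) - j * (j + 1)) / 2 := by
  induction k, hjk using Nat.le_induction with
  | base => simp
  | succ k hjk ih =>
    rw [sum_Icc_succ_top (by omega), ih]
    push_cast
    ring

lemma one_add_div_mul_weight {K : Type*} [Field K] [CharZero K] {n i : K} (hi : n - i ≠ 0) :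
    (1 + (i - n / 4) / (6 * (n - i))) * ((n - i) / ((n - 1) * n))
      = (23 * n / 4 - 5 * i) / (6 * (n - 1) * n) := by
  rcases eq_or_ne ((n - 1) * n) 0 with h | h
  · simp [mul_assoc, h]
  · field_simp
    ring

lemma five_sixths_add_div_mul_weight {K : Type*} [Field K] [CharZero K] {n i : K}
    (hi : n - i ≠ 0) :
    (5 / 6 + (n / 4) / (6 * (n - i))) * ((n - i) / ((n - 1) * n))
      = (21 * n / 4 - 5 * i) / (6 * (n - 1) * n) := by
  rcases eq_or_ne ((n - 1) * n) 0 with h | h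
  · simp [mul_assoc, h]
  · field_simp
    ring

lemma eighty_nine_div_192_lt_of_one_lt {K : Type*} [Field K] [LinearOrder K]
    [IsStrictOrderedRing K] {x : K} (hx : 1 < x) :
    89 / 192 < (89 * x ^ 2 / 32 - 15 * x / 8) / (6 * (x - 1) * x) := by
  rw [lt_div_iff₀ (by nlinarith)]
  nlinarith

/-- With `a*_i = (n−i)/((n−1)n)` and `4 ∣ n`, the LP objective
equals `1/24 + (89n²/32 − 15n/8)/(6(n−1)n)` and strictly exceeds `1/24 + 89/192`. -/
theorem stmt16 (n : ℕ) (h4 : 4 ∣ n) (hn : 2 ≤ n) (a : ℕ → ℚ)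
    (ha : ∀ i : ℕ, a i = ((n : ℚ) - i) / (((n : ℚ) - 1) * n)) :
    (1 / 24 + (∑ i ∈ Finset.Icc 1 (n / 2),
        (1 + ((i : ℚ) - (n : ℚ) / 4) / (6 * ((n : ℚ) - i))) * a i)
      + (∑ i ∈ Finset.Icc (n / 2 + 1) (3 * n / 4),
        (5 / 6 + ((n : ℚ) / 4) / (6 * ((n : ℚ) - i))) * a i)
      = 1 / 24 + (89 * (n : ℚ) ^ 2 / 32 - 15 * (n : ℚ) / 8) / (6 * ((n : ℚ) - 1) * n)) ∧
    1 / 24 + (89 * (n : ℚ) ^ 2 / 32 - 15 * (n : ℚ) / 8) / (6 * ((n : ℚ) - 1) * n)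
      > 1 / 24 + 89 / 192 := by
  refine ⟨?_, (add_lt_add_iff_left _).2 (eighty_nine_div_192_lt_of_one_lt (by norm_cast))⟩
  obtain ⟨m, rfl⟩ := h4
  have hi : ∀ i ∈ Icc 1 (3 * m), ((4 * m : ℕ) : ℚ) - i ≠ 0 := fun i hmem => by
    rw [sub_ne_zero, Ne, Nat.cast_inj]
    grind
  rw [show 4 * m / 2 = 2 * m by omega, show 3 * (4 * m) / 4 = 3 * m by omega]
  simp only [ha]
  rw [sum_congr rfl fun i h => one_add_div_mul_weight (hi i (Icc_subset_Icc le_rfl (by omega) h)),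
    sum_congr rfl fun i h => five_sixths_add_div_mul_weight
      (hi i (Icc_subset_Icc (by omega) le_rfl h)),
    ← sum_div, ← sum_div, sum_Icc_add_one_sub_mul_natCast _ _ (Nat.zero_le _),
    sum_Icc_add_one_sub_mul_natCast _ _ (by omega), add_assoc, ← add_div]
  push_cast
  ring
end
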